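/- Let p be a prime, k an integer not divisible by p, and m₁, m₂ natural numbers. Then A_k^{m₁} · (A_k^{m₂})ᵀ equals the 2×2 identity matrix if and only if m₁ ≡ m₂ (mod p). (Rotating the hash qubit counterclockwise for the first string and clockwise for the second returns it to the initial state exactly when the two lengths agree modulo p, which is the correctness of the quantum hash comparison.) -/

import Mathlib

/-!
`θ ↦ A(θ)` turns addition of angles into matrix multiplication and negation into transposition,
so `A_k^{m₁} (A_k^{m₂})ᵀ` is the rotation by `2π (m₁ - m₂) k / p`. That is the identity iff
`p ∣ (m₁ - m₂) k`, and as `p` is prime and `p ∤ k`, iff `p ∣ m₁ - m₂`.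
-/

open Matrix

/-- The 2×2 real rotation matrix `A_k` by angle `2kπ/p`, the transition matrix of the
two-state QFA `M_k` for the language `MOD_p` on input symbol `a`. -/
noncomputable def Ak (p : ℕ) (k : ℤ) : Matrix (Fin 2) (Fin 2) ℝ :=
  !![Real.cos (2 * k * Real.pi / p), -Real.sin (2 * k * Real.pi / p);
     Real.sin (2 * k * Real.pi / p),  Real.cos (2 * k * Real.pi / p)]

open Real

noncomputable def rotationMatrix (θ : ℝ) : Matrix (Fin 2) (Fin 2) ℝ :=
  !![cos θ, -sin θ; sin θ, cos θ]

lemma rotationMatrix_zero : rotationMatrix 0 = 1 := by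
  simp [rotationMatrix, one_fin_two]

lemma rotationMatrix_mul (θ φ : ℝ) :
    rotationMatrix θ * rotationMatrix φ = rotationMatrix (θ + φ) := by
  simp only [rotationMatrix, mul_fin_two, cos_add, sin_add]
  congr 1; ring_nf

lemma rotationMatrix_pow (θ : ℝ) (m : ℕ) : rotationMatrix θ ^ m = rotationMatrix (m * θ) := by
  induction m with
  | zero => simp [rotationMatrix_zero]
  | succ m ih => rw [pow_succ, ih, rotationMatrix_mul]; push_cast; ring_nf

lemma rotationMatrix_transpose (θ : ℝ) : (rotationMatrix θ)ᵀ = rotationMatrix (-θ) := by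
  ext i j
  fin_cases i <;> fin_cases j <;> simp [rotationMatrix]

lemma rotationMatrix_eq_one_iff (θ : ℝ) : rotationMatrix θ = 1 ↔ cos θ = 1 := by
  refine ⟨fun h ↦ by simpa [rotationMatrix] using congr_fun₂ h 0 0, fun h ↦ ?_⟩
  have hsin : sin θ = 0 := sin_eq_zero_iff_cos_eq.mpr (Or.inl h)
  simp [rotationMatrix, one_fin_two, h, hsin]

lemma cos_two_pi_mul_div_eq_one_iff {p : ℕ} (hp : p ≠ 0) (z : ℤ) :
    cos (2 * π * z / p) = 1 ↔ (p : ℤ) ∣ z := by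
  have hp' : (p : ℝ) ≠ 0 := Nat.cast_ne_zero.mpr hp
  rw [cos_eq_one_iff]
  refine ⟨fun ⟨n, hn⟩ ↦ ⟨n, ?_⟩, fun ⟨n, hn⟩ ↦ ⟨n, ?_⟩⟩
  · rw [eq_div_iff hp'] at hn
    exact_mod_cast (mul_left_cancel₀ two_pi_pos.ne' (by linear_combination -hn) :
      (z : ℝ) = p * n)
  · rw [hn, eq_div_iff hp']
    push_cast
    ring

/-- Correctness of the quantum hash comparison: rotating counterclockwise `m₁` times and
clockwise `m₂` times returns to the initial state exactly when `m₁ ≡ m₂ (mod p)`. -/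
theorem ak_pow_mul_pow_transpose_eq_one_iff (p : ℕ) (hp : p.Prime) (k : ℤ)
    (hk : ¬ (p : ℤ) ∣ k) (m₁ m₂ : ℕ) :
    Ak p k ^ m₁ * (Ak p k ^ m₂)ᵀ = 1 ↔ m₁ ≡ m₂ [MOD p] := by
  have hAk : Ak p k = rotationMatrix (2 * k * π / p) := rfl
  have hangle : (m₁ : ℝ) * (2 * k * π / p) + -(m₂ * (2 * k * π / p)) =
      2 * π * (((m₁ : ℤ) - m₂) * k : ℤ) / p := by
    push_cast; ring
  rw [hAk, rotationMatrix_pow, rotationMatrix_pow, rotationMatrix_transpose, rotationMatrix_mul,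
    rotationMatrix_eq_one_iff, hangle, cos_two_pi_mul_div_eq_one_iff hp.ne_zero,
    (Nat.prime_iff_prime_int.mp hp).dvd_mul, or_iff_left hk, Nat.modEq_iff_dvd, ← dvd_neg, neg_sub]
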